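/- Let i_j := ∫_ℝ r^{2j} √(1 + r²) μ(r) dr for integers j ≥ 0, where μ(r) := (2π)^{−1/2} e^{−r²/2}. Then i_2 = i_0 + 3 i_1, i_3 = 5 i_0 + 18 i_1, i_4 = 40 i_0 + 141 i_1, i_5 = 395 i_0 + 1395 i_1, and i_6 = 4705 i_0 + 16614 i_1. -/

import Mathlib

open MeasureTheory

/-- The standard Gaussian density `μ(r) = (2π)^{-1/2} e^{-r²/2}`. -/
noncomputable def gaussDensity (r : ℝ) : ℝ :=
  (Real.sqrt (2 * Real.pi))⁻¹ * Real.exp (-r ^ 2 / 2)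

/-- `i_j = ∫_ℝ r^{2j} √(1 + r²) μ(r) dr`. -/
noncomputable def iGauss (j : ℕ) : ℝ :=
  ∫ r : ℝ, r ^ (2 * j) * Real.sqrt (1 + r ^ 2) * gaussDensity r

/-!
Integration by parts against the Gaussian: since `μ' = -r μ`, the derivative of
`r^{n+1} (1 + r²)^{3/2} μ(r)` is `((n + 1) rⁿ + (n + 3) r^{n+2} - r^{n+4}) √(1 + r²) μ(r)`.
Both are integrable (polynomial times Gaussian), so the derivative integrates to zero. For `n = 2j`
this is the recursion `i_{j+2} = (2j + 3) i_{j+1} + (2j + 1) i_j`, iterated from `i₀` and `i₁`.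
-/

noncomputable def sqrtGaussMoment (n : ℕ) : ℝ :=
  ∫ r : ℝ, r ^ n * Real.sqrt (1 + r ^ 2) * gaussDensity r

lemma gaussDensity_nonneg (r : ℝ) : 0 ≤ gaussDensity r := by
  unfold gaussDensity
  positivity

lemma hasDerivAt_gaussDensity (r : ℝ) : HasDerivAt gaussDensity (-r * gaussDensity r) r := by
  have hexponent : HasDerivAt (fun x : ℝ => -x ^ 2 / 2) (-r) r := by
    refine (((hasDerivAt_pow 2 r).neg).div_const 2).congr_deriv ?_
    ring
  refine (((Real.hasDerivAt_exp _).comp r hexponent).const_mul (Real.sqrt (2 * Real.pi))⁻¹)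
    |>.congr_deriv ?_
  unfold gaussDensity
  ring

lemma integrable_pow_mul_gaussDensity (n : ℕ) :
    Integrable fun r : ℝ => r ^ n * gaussDensity r := by
  have h := integrable_rpow_mul_exp_neg_mul_sq (b := 2⁻¹) (by norm_num)
    (s := n) (neg_one_lt_zero.trans_le n.cast_nonneg)
  refine (h.const_mul (Real.sqrt (2 * Real.pi))⁻¹).congr (.of_forall fun r => ?_)
  simp only [gaussDensity, Real.rpow_natCast]
  ring_nf

lemma integrable_pow_mul_sqrt_one_add_sq_mul_gaussDensity (n : ℕ) :
    Integrable fun r : ℝ => r ^ n * Real.sqrt (1 + r ^ 2) * gaussDensity r := by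
  refine ((integrable_pow_mul_gaussDensity n).norm.add
    (integrable_pow_mul_gaussDensity (n + 2)).norm).mono' ?_ (.of_forall fun r => ?_)
  · exact Continuous.aestronglyMeasurable (by unfold gaussDensity; fun_prop)
  · have hsqrt : Real.sqrt (1 + r ^ 2) ≤ 1 + r ^ 2 :=
      (Real.sqrt_le_left (by positivity)).mpr (by nlinarith [sq_nonneg r])
    simp only [Pi.add_apply, norm_mul, norm_pow, Real.norm_eq_abs,
      abs_of_nonneg (Real.sqrt_nonneg _), abs_of_nonneg (gaussDensity_nonneg r)]
    calc |r| ^ n * Real.sqrt (1 + r ^ 2) * gaussDensity r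
        ≤ |r| ^ n * (1 + r ^ 2) * gaussDensity r := by gcongr; exact gaussDensity_nonneg r
      _ = |r| ^ n * gaussDensity r + |r| ^ (n + 2) * gaussDensity r := by
        rw [pow_add, ← sq_abs r]
        ring

lemma hasDerivAt_pow_mul_one_add_sq_mul_sqrt_mul_gaussDensity (n : ℕ) (r : ℝ) :
    HasDerivAt
      (fun x : ℝ => x ^ (n + 1) * (1 + x ^ 2) * Real.sqrt (1 + x ^ 2) * gaussDensity x)
      (((n + 1) * r ^ n + (n + 3) * r ^ (n + 2) - r ^ (n + 4)) *
        Real.sqrt (1 + r ^ 2) * gaussDensity r) r := by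
  have hpos : (0 : ℝ) < 1 + r ^ 2 := by positivity
  have hpow : HasDerivAt (fun x : ℝ => x ^ (n + 1)) ((n + 1) * r ^ n) r := by
    simpa using hasDerivAt_pow (n + 1) r
  have hquad : HasDerivAt (fun x : ℝ => 1 + x ^ 2) (2 * r) r := by
    simpa using (hasDerivAt_pow 2 r).const_add 1
  have hsqrt : HasDerivAt (fun x : ℝ => Real.sqrt (1 + x ^ 2))
      (1 / (2 * Real.sqrt (1 + r ^ 2)) * (2 * r)) r :=
    (Real.hasDerivAt_sqrt hpos.ne').comp r hquad
  refine (((hpow.mul hquad).mul hsqrt).mul (hasDerivAt_gaussDensity r)).congr_deriv ?_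
  have hsqrt_pos : 0 < Real.sqrt (1 + r ^ 2) := Real.sqrt_pos.mpr hpos
  have hsqrt_sq : Real.sqrt (1 + r ^ 2) ^ 2 = 1 + r ^ 2 := Real.sq_sqrt hpos.le
  simp only [Pi.mul_apply]
  field_simp
  linear_combination (-(r ^ 2 * r ^ n * gaussDensity r)) * hsqrt_sq

lemma sqrtGaussMoment_add_four (n : ℕ) :
    sqrtGaussMoment (n + 4) =
      (n + 3) * sqrtGaussMoment (n + 2) + (n + 1) * sqrtGaussMoment n := by
  have hintegrable := integrable_pow_mul_sqrt_one_add_sq_mul_gaussDensity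
  have hprimitive : Integrable fun x : ℝ =>
      x ^ (n + 1) * (1 + x ^ 2) * Real.sqrt (1 + x ^ 2) * gaussDensity x :=
    ((hintegrable (n + 1)).add (hintegrable (n + 3))).congr
      (.of_forall fun x => by simp only [Pi.add_apply]; ring)
  have hderiv (x : ℝ) : HasDerivAt
      (fun x : ℝ => x ^ (n + 1) * (1 + x ^ 2) * Real.sqrt (1 + x ^ 2) * gaussDensity x)
      ((n + 1) * (x ^ n * Real.sqrt (1 + x ^ 2) * gaussDensity x) +
        (n + 3) * (x ^ (n + 2) * Real.sqrt (1 + x ^ 2) * gaussDensity x) -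
        x ^ (n + 4) * Real.sqrt (1 + x ^ 2) * gaussDensity x) x :=
    (hasDerivAt_pow_mul_one_add_sq_mul_sqrt_mul_gaussDensity n x).congr_deriv (by ring)
  have hzero := integral_eq_zero_of_hasDerivAt_of_integrable hderiv
    ((((hintegrable n).const_mul _).add ((hintegrable (n + 2)).const_mul _)).sub
      (hintegrable (n + 4))) hprimitive
  rw [integral_sub, integral_add, integral_const_mul, integral_const_mul] at hzero
  · unfold sqrtGaussMoment
    linarith
  · exact (hintegrable n).const_mul _
  · exact (hintegrable (n + 2)).const_mul _
  · exact ((hintegrable n).const_mul _).add ((hintegrable (n + 2)).const_mul _)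
  · exact hintegrable (n + 4)

lemma iGauss_eq_sqrtGaussMoment (j : ℕ) : iGauss j = sqrtGaussMoment (2 * j) := rfl

lemma iGauss_add_two (j : ℕ) :
    iGauss (j + 2) = (2 * j + 3) * iGauss (j + 1) + (2 * j + 1) * iGauss j := by
  have h := sqrtGaussMoment_add_four (2 * j)
  rw [show 2 * j + 4 = 2 * (j + 2) by ring, show 2 * j + 2 = 2 * (j + 1) by ring] at h
  simp only [iGauss_eq_sqrtGaussMoment, h]
  push_cast
  ring

/-- Explicit expressions of `i₂, …, i₆` in terms of `i₀` and `i₁`. -/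
theorem iGauss_values :
    iGauss 2 = iGauss 0 + 3 * iGauss 1 ∧
    iGauss 3 = 5 * iGauss 0 + 18 * iGauss 1 ∧
    iGauss 4 = 40 * iGauss 0 + 141 * iGauss 1 ∧
    iGauss 5 = 395 * iGauss 0 + 1395 * iGauss 1 ∧
    iGauss 6 = 4705 * iGauss 0 + 16614 * iGauss 1 := by
  have h2 := iGauss_add_two 0
  have h3 := iGauss_add_two 1
  have h4 := iGauss_add_two 2
  have h5 := iGauss_add_two 3
  have h6 := iGauss_add_two 4
  norm_num at h2 h3 h4 h5 h6
  refine ⟨by linarith, by linarith, by linarith, by linarith, by linarith⟩
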